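/- The following 24 words in the generators of Γ₁ are each equal to the 5×5 identity matrix: g₃g₁₆g₄², g₃g₁₀⁻²g₄⁻¹, g₂g₄g₁₆⁻¹g₁₅⁻¹, g₄g₁₆g₁₁g₁₄, g₇g₁₅⁻¹g₁₆⁻², g₄g₁₄⁻¹g₁₃g₇⁻¹, g₃²g₇⁻¹g₁₆⁻¹, g₁g₇⁻¹g₃g₁₀, g₄g₁₀⁻¹g₁₄⁻², g₃g₁₅⁻¹g₆⁻¹g₁₀⁻¹, g₁g₁₃⁻¹g₁₄⁻¹g₃, g₆²g₁₀⁻¹g₁₄, g₂g₁₁g₄g₆⁻¹, g₁g₁₅⁻¹g₁₆g₆⁻¹, g₂g₁₆⁻¹g₁₀⁻¹g₆, g₁g₁₃g₁₀g₁₅, g₆g₁₄⁻¹g₁₃⁻², g₁g₁₁²g₂⁻¹, g₂g₁₄⁻¹g₇⁻¹g₁₁⁻¹, g₃g₁₃⁻¹g₁₁⁻¹g₇, g₁²g₂g₁₃, g₂²g₆⁻¹g₁₃⁻¹, g₇²g₁₁⁻¹g₁₅, g₁g₁₁⁻¹g₁₅⁻². (These are the defining relators of the fundamental group Γ₁ of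 the manifold 24c1.1, one for each of the 24 ridge cycles.) -/

import Mathlib

/-!
Every generator is `2⁻¹ • G` for an integer matrix `G` with `Gᵀ J G = 4 J`, where
`J = diag(1, 1, 1, 1, -1)` is the Lorentz form (the generators are isometries of the hyperboloid
model of hyperbolic 4-space). Hence `g⁻¹ = 2⁻¹ • J Gᵀ J`, so a relator with `r` letters equals
`2⁻ʳ` times a product of integer matrices, and it is the identity exactly when that integer
product is `2ʳ`: a finite computation over `ℤ`, which the kernel checks by `decide`.
-/

open Matrix

noncomputable def g1 : Matrix (Fin 5) (Fin 5) ℝ :=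
  (1/2 : ℝ) • !![-3, -3, 1, 1, 4; -1, 1, 1, -1, 0; -3, -3, -1, -1, 4; 1, -1, 1, -1, 0; -4, -4, 0, 0, 6]

noncomputable def g2 : Matrix (Fin 5) (Fin 5) ℝ :=
  (1/2 : ℝ) • !![1, 1, -1, 1, 0; 3, -3, 1, 1, 4; 3, -3, -1, -1, 4; 1, 1, 1, -1, 0; 4, -4, 0, 0, 6]

noncomputable def g3 : Matrix (Fin 5) (Fin 5) ℝ :=
  (1/2 : ℝ) • !![1, 1, -1, 1, 0; 3, -3, 1, 1, -4; 3, -3, -1, -1, -4; 1, 1, 1, -1, 0; -4, 4, 0, 0, 6]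

noncomputable def g4 : Matrix (Fin 5) (Fin 5) ℝ :=
  (1/2 : ℝ) • !![-3, -3, 1, 1, -4; -1, 1, 1, -1, 0; -3, -3, -1, -1, -4; 1, -1, 1, -1, 0; 4, 4, 0, 0, 6]

noncomputable def g6 : Matrix (Fin 5) (Fin 5) ℝ :=
  (1/2 : ℝ) • !![-1, 1, -1, -1, 0; -1, -1, -1, 1, 0; 3, -1, -3, -1, 4; 3, 1, -3, 1, 4; 4, 0, -4, 0, 6]

noncomputable def g7 : Matrix (Fin 5) (Fin 5) ℝ :=
  (1/2 : ℝ) • !![-1, 1, -1, -1, 0; -1, -1, -1, 1, 0; 3, -1, -3, -1, -4; 3, 1, -3, 1, -4; -4, 0, 4, 0, 6]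

noncomputable def g10 : Matrix (Fin 5) (Fin 5) ℝ :=
  (1/2 : ℝ) • !![1, 1, 1, -1, 0; -1, -3, 3, -1, -4; 1, -1, -1, -1, 0; -1, 3, -3, -1, 4; 0, 4, -4, 0, 6]

noncomputable def g11 : Matrix (Fin 5) (Fin 5) ℝ :=
  (1/2 : ℝ) • !![1, 1, 1, -1, 0; -1, -3, 3, -1, 4; 1, -1, -1, -1, 0; -1, 3, -3, -1, -4; 0, -4, 4, 0, 6]

noncomputable def g13 : Matrix (Fin 5) (Fin 5) ℝ :=
  (1/2 : ℝ) • !![-1, -1, -1, 1, 0; -3, -1, 1, -3, 4; -1, 1, 1, 1, 0; -3, 1, -1, -3, 4; -4, 0, 0, -4, 6]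

noncomputable def g14 : Matrix (Fin 5) (Fin 5) ℝ :=
  (1/2 : ℝ) • !![-1, 1, 1, -1, 0; -1, -1, -1, -1, 0; -3, -1, 1, 3, -4; 3, -1, 1, -3, 4; 4, 0, 0, -4, 6]

noncomputable def g15 : Matrix (Fin 5) (Fin 5) ℝ :=
  (1/2 : ℝ) • !![-1, 1, 1, -1, 0; -1, -1, -1, -1, 0; -3, -1, 1, 3, 4; 3, -1, 1, -3, -4; -4, 0, 0, 4, 6]

noncomputable def g16 : Matrix (Fin 5) (Fin 5) ℝ :=
  (1/2 : ℝ) • !![-1, -1, -1, 1, 0; -3, -1, 1, -3, -4; -1, 1, 1, 1, 0; -3, 1, -1, -3, -4; 4, 0, 0, 4, 6]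

section DyadicMatrix

variable {K : Type*} [Field K] {l m n : Type*}

def dyadicMatrix (k : ℕ) (X : Matrix m n ℤ) : Matrix m n K :=
  ((2 : K) ^ k)⁻¹ • X.map (Int.castRingHom K)

-- Without `(K := K)` on both factors, `*` is elaborated with `CStarMatrix`'s default `HMul`.
theorem dyadicMatrix_mul [Fintype m] (k k' : ℕ) (X : Matrix l m ℤ) (Y : Matrix m n ℤ) :
    dyadicMatrix (K := K) k X * dyadicMatrix (K := K) k' Y = dyadicMatrix (k + k') (X * Y) := by
  rw [dyadicMatrix, dyadicMatrix, dyadicMatrix, Matrix.smul_mul, Matrix.mul_smul, smul_smul,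
    Matrix.map_mul, pow_add, mul_inv]

section Square

variable [Fintype n] [DecidableEq n]

theorem dyadicMatrix_pow (k j : ℕ) (X : Matrix n n ℤ) :
    dyadicMatrix (K := K) k X ^ j = dyadicMatrix (k * j) (X ^ j) := by
  induction j with
  | zero => simp [dyadicMatrix]
  | succ j ih => rw [pow_succ, ih, dyadicMatrix_mul, pow_succ, mul_add, mul_one]

theorem dyadicMatrix_eq_one_iff [CharZero K] (k : ℕ) (X : Matrix n n ℤ) :
    dyadicMatrix (K := K) k X = 1 ↔ X = 2 ^ k := by
  have h2k : ((2 : Matrix n n ℤ) ^ k).map (Int.castRingHom K) = (2 : K) ^ k • 1 := by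
    rw [Algebra.smul_def, mul_one, map_pow, map_ofNat, ← RingHom.mapMatrix_apply, map_pow,
      map_ofNat]
  rw [dyadicMatrix, inv_smul_eq_iff₀ (pow_ne_zero k two_ne_zero), ← h2k,
    (Matrix.map_injective (RingHom.injective_int (Int.castRingHom K))).eq_iff]

theorem inv_dyadicMatrix [CharZero K] {k : ℕ} {X Y : Matrix n n ℤ} (h : Y * X = 2 ^ (k + k)) :
    (dyadicMatrix (K := K) k X)⁻¹ = dyadicMatrix k Y :=
  inv_eq_left_inv <| by rw [dyadicMatrix_mul, dyadicMatrix_eq_one_iff, h]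

theorem inv_dyadicMatrix_eq_of_transpose_mul_mul [CharZero K] {k : ℕ} {J X : Matrix n n ℤ}
    (hJ : J * J = 1) (hX : Xᵀ * J * X = 2 ^ (k + k) * J) :
    (dyadicMatrix (K := K) k X)⁻¹ = dyadicMatrix k (J * Xᵀ * J) :=
  inv_dyadicMatrix <| calc
    J * Xᵀ * J * X = J * (Xᵀ * J * X) := by simp only [Matrix.mul_assoc]
    _ = 2 ^ (k + k) * (J * J) := by
      rw [hX, ← Matrix.mul_assoc, ((Commute.ofNat_right J 2).pow_right _).eq, Matrix.mul_assoc]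
    _ = 2 ^ (k + k) := by rw [hJ, Matrix.mul_one]

end Square

end DyadicMatrix

def lorentzForm : Matrix (Fin 5) (Fin 5) ℤ := diagonal ![1, 1, 1, 1, -1]

theorem g1_eq_dyadicMatrix : g1 = dyadicMatrix 1
    !![-3, -3, 1, 1, 4; -1, 1, 1, -1, 0; -3, -3, -1, -1, 4; 1, -1, 1, -1, 0; -4, -4, 0, 0, 6] := by
  ext i j; fin_cases i <;> fin_cases j <;> norm_num [g1, dyadicMatrix]

theorem g2_eq_dyadicMatrix : g2 = dyadicMatrix 1
    !![1, 1, -1, 1, 0; 3, -3, 1, 1, 4; 3, -3, -1, -1, 4; 1, 1, 1, -1, 0; 4, -4, 0, 0, 6] := by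
  ext i j; fin_cases i <;> fin_cases j <;> norm_num [g2, dyadicMatrix]

theorem g3_eq_dyadicMatrix : g3 = dyadicMatrix 1
    !![1, 1, -1, 1, 0; 3, -3, 1, 1, -4; 3, -3, -1, -1, -4; 1, 1, 1, -1, 0; -4, 4, 0, 0, 6] := by
  ext i j; fin_cases i <;> fin_cases j <;> norm_num [g3, dyadicMatrix]

theorem g4_eq_dyadicMatrix : g4 = dyadicMatrix 1
    !![-3, -3, 1, 1, -4; -1, 1, 1, -1, 0; -3, -3, -1, -1, -4; 1, -1, 1, -1, 0; 4, 4, 0, 0, 6] := by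
  ext i j; fin_cases i <;> fin_cases j <;> norm_num [g4, dyadicMatrix]

theorem g6_eq_dyadicMatrix : g6 = dyadicMatrix 1
    !![-1, 1, -1, -1, 0; -1, -1, -1, 1, 0; 3, -1, -3, -1, 4; 3, 1, -3, 1, 4; 4, 0, -4, 0, 6] := by
  ext i j; fin_cases i <;> fin_cases j <;> norm_num [g6, dyadicMatrix]

theorem g7_eq_dyadicMatrix : g7 = dyadicMatrix 1
    !![-1, 1, -1, -1, 0; -1, -1, -1, 1, 0; 3, -1, -3, -1, -4; 3, 1, -3, 1, -4; -4, 0, 4, 0, 6] := by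
  ext i j; fin_cases i <;> fin_cases j <;> norm_num [g7, dyadicMatrix]

theorem g10_eq_dyadicMatrix : g10 = dyadicMatrix 1
    !![1, 1, 1, -1, 0; -1, -3, 3, -1, -4; 1, -1, -1, -1, 0; -1, 3, -3, -1, 4; 0, 4, -4, 0, 6] := by
  ext i j; fin_cases i <;> fin_cases j <;> norm_num [g10, dyadicMatrix]

theorem g11_eq_dyadicMatrix : g11 = dyadicMatrix 1
    !![1, 1, 1, -1, 0; -1, -3, 3, -1, 4; 1, -1, -1, -1, 0; -1, 3, -3, -1, -4; 0, -4, 4, 0, 6] := by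
  ext i j; fin_cases i <;> fin_cases j <;> norm_num [g11, dyadicMatrix]

theorem g13_eq_dyadicMatrix : g13 = dyadicMatrix 1
    !![-1, -1, -1, 1, 0; -3, -1, 1, -3, 4; -1, 1, 1, 1, 0; -3, 1, -1, -3, 4; -4, 0, 0, -4, 6] := by
  ext i j; fin_cases i <;> fin_cases j <;> norm_num [g13, dyadicMatrix]

theorem g14_eq_dyadicMatrix : g14 = dyadicMatrix 1
    !![-1, 1, 1, -1, 0; -1, -1, -1, -1, 0; -3, -1, 1, 3, -4; 3, -1, 1, -3, 4; 4, 0, 0, -4, 6] := by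
  ext i j; fin_cases i <;> fin_cases j <;> norm_num [g14, dyadicMatrix]

theorem g15_eq_dyadicMatrix : g15 = dyadicMatrix 1
    !![-1, 1, 1, -1, 0; -1, -1, -1, -1, 0; -3, -1, 1, 3, 4; 3, -1, 1, -3, -4; -4, 0, 0, 4, 6] := by
  ext i j; fin_cases i <;> fin_cases j <;> norm_num [g15, dyadicMatrix]

theorem g16_eq_dyadicMatrix : g16 = dyadicMatrix 1
    !![-1, -1, -1, 1, 0; -3, -1, 1, -3, -4; -1, 1, 1, 1, 0; -3, 1, -1, -3, -4; 4, 0, 0, 4, 6] := by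
  ext i j; fin_cases i <;> fin_cases j <;> norm_num [g16, dyadicMatrix]

theorem stmt8 :
    g3 * g16 * g4 ^ 2 = 1 ∧
    g3 * g10⁻¹ ^ 2 * g4⁻¹ = 1 ∧
    g2 * g4 * g16⁻¹ * g15⁻¹ = 1 ∧
    g4 * g16 * g11 * g14 = 1 ∧
    g7 * g15⁻¹ * g16⁻¹ ^ 2 = 1 ∧
    g4 * g14⁻¹ * g13 * g7⁻¹ = 1 ∧
    g3 ^ 2 * g7⁻¹ * g16⁻¹ = 1 ∧
    g1 * g7⁻¹ * g3 * g10 = 1 ∧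
    g4 * g10⁻¹ * g14⁻¹ ^ 2 = 1 ∧
    g3 * g15⁻¹ * g6⁻¹ * g10⁻¹ = 1 ∧
    g1 * g13⁻¹ * g14⁻¹ * g3 = 1 ∧
    g6 ^ 2 * g10⁻¹ * g14 = 1 ∧
    g2 * g11 * g4 * g6⁻¹ = 1 ∧
    g1 * g15⁻¹ * g16 * g6⁻¹ = 1 ∧
    g2 * g16⁻¹ * g10⁻¹ * g6 = 1 ∧
    g1 * g13 * g10 * g15 = 1 ∧
    g6 * g14⁻¹ * g13⁻¹ ^ 2 = 1 ∧
    g1 * g11 ^ 2 * g2⁻¹ = 1 ∧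
    g2 * g14⁻¹ * g7⁻¹ * g11⁻¹ = 1 ∧
    g3 * g13⁻¹ * g11⁻¹ * g7 = 1 ∧
    g1 ^ 2 * g2 * g13 = 1 ∧
    g2 ^ 2 * g6⁻¹ * g13⁻¹ = 1 ∧
    g7 ^ 2 * g11⁻¹ * g15 = 1 ∧
    g1 * g11⁻¹ * g15⁻¹ ^ 2 = 1 := by
  -- `decide` discharges `J * J = 1` and `Gᵀ * J * G = 4 * J` for `J = lorentzForm`.
  simp (disch := decide) only [g1_eq_dyadicMatrix, g2_eq_dyadicMatrix, g3_eq_dyadicMatrix,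
    g4_eq_dyadicMatrix, g6_eq_dyadicMatrix, g7_eq_dyadicMatrix, g10_eq_dyadicMatrix,
    g11_eq_dyadicMatrix, g13_eq_dyadicMatrix, g14_eq_dyadicMatrix, g15_eq_dyadicMatrix,
    g16_eq_dyadicMatrix, inv_dyadicMatrix_eq_of_transpose_mul_mul (J := lorentzForm),
    dyadicMatrix_pow, dyadicMatrix_mul, dyadicMatrix_eq_one_iff]
  decide
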